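/- Let ℓ be a positive integer, N = ℓ(ℓ+1)/2, τ ∈ ℂ with Im τ > 0, and η ∈ ℂ with θ1(2nη) ≠ 0 for all integers 1 ≤ n ≤ 2ℓ. If ζ ∈ ℂ and K ∈ ℂ with K ≠ 0 satisfy Σ_{j=0}^{N} (−1)^j C_j^{(ℓ)} θ1(ζ−4jη) K^{2(N−j)} = 0, then also Σ_{j=0}^{N} (−1)^j C_j^{(ℓ)} θ1((4Nη−ζ)−4jη) K^{−2(N−j)} = 0; that is, the curve defined by this equation is invariant under the involution (ζ, K) ↦ (4Nη−ζ, K^{−1}). -/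

import Mathlib

open Complex Finset

/-- Jacobi theta function θ₁(x|τ). -/
noncomputable def theta1 (τ x : ℂ) : ℂ :=
  ∑' k : ℤ, Complex.exp ((Real.pi : ℂ) * Complex.I * τ * ((k : ℂ) + 1/2)^2 +
    2 * (Real.pi : ℂ) * Complex.I * (x + 1/2) * ((k : ℂ) + 1/2))

/-- Elliptic number [n] = θ₁(2nη). -/
noncomputable def en (τ η : ℂ) (n : ℤ) : ℂ := theta1 τ (2 * (n : ℂ) * η)

/-- Elliptic factorial [n]! = ∏_{j=1}^n [j]. -/
noncomputable def efact (τ η : ℂ) (n : ℕ) : ℂ := ∏ j ∈ Finset.range n, en τ η ((j : ℤ) + 1)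

/-- Elliptic binomial coefficient [n over m]. -/
noncomputable def ebinom (τ η : ℂ) (n m : ℕ) : ℂ :=
  efact τ η n / (efact τ η m * efact τ η (n - m))

/-- Φ(x,ζ) = θ₁(ζ+x)/(θ₁(x)θ₁(ζ)). -/
noncomputable def Phi (τ x ζ : ℂ) : ℂ := theta1 τ (ζ + x) / (theta1 τ x * theta1 τ ζ)

/-- The polynomials A_{(ℓ−s)η}(E), indexed by s = 0, 1, …, ℓ;
`Apoly τ η ℓ E s = A_{(ℓ−s)η}(E)`. -/
noncomputable def Apoly (τ η : ℂ) (ℓ : ℕ) (E : ℂ) : ℕ → ℂ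
  | 0 => 1
  | 1 => en τ η (ℓ : ℤ) / en τ η (2 * (ℓ : ℤ)) * E
  | (s + 2) =>
      en τ η ((ℓ : ℤ) - (s + 1)) / en τ η (2 * (ℓ : ℤ) - (s + 1)) * E *
        Apoly τ η ℓ E (s + 1)
      + en τ η ((s : ℤ) + 1) / en τ η (2 * (ℓ : ℤ) - (s + 1)) * Apoly τ η ℓ E s

/-- The coefficient A_k(x,λ) of the commuting difference operator A_λ. -/
noncomputable def Acoef (τ η : ℂ) (ℓ : ℕ) (k : ℕ) (x lam : ℂ) : ℂ :=
  (-1 : ℂ)^k * (efact τ η ℓ / efact τ η (2*ℓ)) * ebinom τ η ℓ k *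
  (∏ j ∈ Finset.range (ℓ - k),
     theta1 τ (2*x + 2*((ℓ : ℂ) - (j : ℂ))*η) * theta1 τ (2*lam + 2*((ℓ : ℂ) - (j : ℂ))*η) /
       theta1 τ (2*x + 2*lam + 2*((k : ℂ) - (j : ℂ))*η)) *
  (∏ j ∈ Finset.range k,
     theta1 τ (2*x - 2*((ℓ : ℂ) - (j : ℂ))*η) * theta1 τ (2*lam - 2*((ℓ : ℂ) - (j : ℂ))*η) /
       theta1 τ (2*x + 2*lam + 2*((k : ℂ) + (j : ℂ) - (ℓ : ℂ))*η))

/-- The difference operator A_λ acting on functions: (A_λ f)(x) = Σ_k A_k(x,λ) f(x+(2k−ℓ)η+λ). -/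
noncomputable def Aop (τ η : ℂ) (ℓ : ℕ) (lam : ℂ) (f : ℂ → ℂ) (x : ℂ) : ℂ :=
  ∑ k ∈ Finset.range (ℓ + 1), Acoef τ η ℓ k x lam * f (x + (2*(k : ℂ) - (ℓ : ℂ))*η + lam)

/-- All theta-denominators occurring in the coefficients A_k(x,λ) are nonzero. -/
def domAcoef (τ η : ℂ) (ℓ : ℕ) (x lam : ℂ) : Prop :=
  ∀ k ∈ Finset.range (ℓ + 1),
    (∀ j ∈ Finset.range (ℓ - k), theta1 τ (2*x + 2*lam + 2*((k : ℂ) - (j : ℂ))*η) ≠ 0) ∧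
    (∀ j ∈ Finset.range k, theta1 τ (2*x + 2*lam + 2*((k : ℂ) + (j : ℂ) - (ℓ : ℂ))*η) ≠ 0)

/-- The space Θ⁺_{4ℓ} of even theta functions of order 4ℓ. -/
def ThetaPlus (τ : ℂ) (ℓ : ℕ) (F : ℂ → ℂ) : Prop :=
  Differentiable ℂ F ∧
  (∀ x, F (x + 1) = F x) ∧
  (∀ x, F (x + τ) = Complex.exp (-4*(Real.pi : ℂ)*Complex.I*(ℓ : ℂ)*τ
      - 8*(Real.pi : ℂ)*Complex.I*(ℓ : ℂ)*x) * F x) ∧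
  (∀ x, F (-x) = F x)

/-- The coefficient C_j^{(ℓ)}(η) of the spectral curve equation (Proposition 3.1). -/
noncomputable def Ccoef (τ η : ℂ) (ℓ j : ℕ) : ℂ :=
  ∑ J ∈ (Finset.Icc 1 ℓ).powerset.filter (fun J => J.sum id = j),
    (-1 : ℂ)^(J.card * ℓ + J.card * (J.card - 1) / 2 + j) *
    ∏ k ∈ J, ∏ k' ∈ Finset.Icc 1 ℓ \ J,
      en τ η ((k : ℤ) + (k' : ℤ)) / en τ η ((k : ℤ) - (k' : ℤ))

/-!
Reflect the sum by `j ↦ N - j`. Since `θ₁` is odd, `θ₁((4Nη - ζ) - 4(N - j)η) = -θ₁(ζ - 4jη)`, and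
`C_{N-j} = C_j`: the complement `J ↦ {1, …, ℓ} \ J` exchanges `‖J‖ = N - j` with `‖J‖ = j`, and
swapping the two factors of the double product costs `(-1)^(|J| |Jᶜ|)` because `[-n] = -[n]`, which
is exactly the change in `(-1)^(κ(J) + ‖J‖)`. Hence the transformed sum is
`-(-1)^N K^{-2N}` times the original one.
-/

lemma theta1_neg (τ x : ℂ) : theta1 τ (-x) = -theta1 τ x := by
  unfold theta1
  rw [← tsum_neg, ← (Equiv.subLeft (-1 : ℤ)).tsum_eq]
  refine tsum_congr fun k => ?_
  -- the substitution k ↦ -1 - k fixes (k + 1/2)² and changes the exponent by 2πi(-k) - πi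
  rw [Equiv.subLeft_apply, show (Real.pi : ℂ) * I * τ * (((-1 - k : ℤ) : ℂ) + 1/2)^2 +
      2 * Real.pi * I * (-x + 1/2) * (((-1 - k : ℤ) : ℂ) + 1/2)
      = (Real.pi * I * τ * ((k : ℂ) + 1/2)^2 + 2 * Real.pi * I * (x + 1/2) * ((k : ℂ) + 1/2))
        + ((-k : ℤ) : ℂ) * (2 * Real.pi * I) + -(Real.pi * I) by push_cast; ring,
    exp_add, exp_add, exp_int_mul_two_pi_mul_I, exp_neg, exp_pi_mul_I]
  norm_num

lemma en_neg (τ η : ℂ) (n : ℤ) : en τ η (-n) = -en τ η n := by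
  rw [en, en, show 2 * ((-n : ℤ) : ℂ) * η = -(2 * (n : ℂ) * η) by push_cast; ring, theta1_neg]

lemma en_add_div_en_sub_comm (τ η : ℂ) (k k' : ℤ) :
    en τ η (k' + k) / en τ η (k' - k) = -(en τ η (k + k') / en τ η (k - k')) := by
  rw [add_comm, ← neg_sub, en_neg, div_neg]

lemma Finset.prod_prod_swap_of_antisymm {ι M : Type*} [CommMonoid M] [HasDistribNeg M]
    (g : ι → ι → M) (hg : ∀ i j, g j i = -g i j) (s t : Finset ι) :
    ∏ i ∈ s, ∏ j ∈ t, g i j = (-1) ^ (#s * #t) * ∏ i ∈ t, ∏ j ∈ s, g i j := by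
  rw [prod_comm, pow_mul, ← prod_const, ← prod_mul_distrib]
  refine prod_congr rfl fun j _ => ?_
  rw [← prod_const, ← prod_mul_distrib]
  exact prod_congr rfl fun i _ => by rw [hg, neg_one_mul]

lemma Finset.sum_Icc_one_id (n : ℕ) : ∑ i ∈ Icc 1 n, i = n * (n + 1) / 2 := by
  have h := sum_range_id (n + 1)
  rwa [range_eq_Ico, sum_eq_sum_Ico_succ_bot (Nat.add_one_pos n), Ico_add_one_right_eq_Icc,
    zero_add, Nat.add_sub_cancel, mul_comm] at h

lemma two_mul_div_two_add_self (m : ℕ) : 2 * (m * (m - 1) / 2) + m = m * m := by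
  rw [Nat.two_mul_div_two_of_even (Nat.even_mul_pred_self m), Nat.mul_sub_one,
    Nat.sub_add_cancel (Nat.le_mul_self m)]

/-- With `a = |J|`: the signs `(-1)^(κ(J) + ‖J‖)` of `J` and of its complement in `{1, …, ℓ}`
differ exactly by the sign `(-1)^(|J| |Jᶜ|)` of swapping the double product in `Ccoef`. -/
lemma neg_one_pow_kappa_compl {R : Type*} [Monoid R] [HasDistribNeg R] {ℓ a N j : ℕ}
    (ha : a ≤ ℓ) (hN : N = ℓ * (ℓ + 1) / 2) (hj : j ≤ N) :
    (-1 : R) ^ (a * ℓ + a * (a - 1) / 2 + (N - j)) * (-1) ^ (a * (ℓ - a))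
      = (-1) ^ ((ℓ - a) * ℓ + (ℓ - a) * (ℓ - a - 1) / 2 + j) := by
  obtain ⟨b, rfl⟩ := Nat.exists_eq_add_of_le ha
  rw [← pow_add, Nat.add_sub_cancel_left]
  refine neg_one_pow_congr (Nat.even_add.mp ⟨(a + b) * (a + b), ?_⟩)
  have hNab : 2 * N = (a + b) * (a + b + 1) := by
    rw [hN]; exact Nat.two_mul_div_two_of_even (Nat.even_mul_succ_self _)
  have ha2 := two_mul_div_two_add_self a
  have hb2 := two_mul_div_two_add_self b
  ring_nf at hNab ha2 hb2 ⊢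
  omega

lemma Finset.sdiff_mem_powerset_filter_sum_id {s J : Finset ℕ} {j : ℕ}
    (hJ : J ∈ s.powerset.filter (fun J => J.sum id = j)) :
    s \ J ∈ s.powerset.filter (fun J => J.sum id = s.sum id - j) := by
  rw [mem_filter, mem_powerset] at hJ ⊢
  exact ⟨sdiff_subset, by rw [← hJ.2, ← sum_sdiff hJ.1, Nat.add_sub_cancel]⟩

lemma Ccoef_reflect (τ η : ℂ) {ℓ N j : ℕ} (hN : N = ℓ * (ℓ + 1) / 2) (hj : j ≤ N) :
    Ccoef τ η ℓ (N - j) = Ccoef τ η ℓ j := by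
  have hsum : ∑ i ∈ Icc 1 ℓ, i = N := by rw [hN, sum_Icc_one_id]
  unfold Ccoef
  refine sum_nbij' (Icc 1 ℓ \ ·) (Icc 1 ℓ \ ·) (fun J hJ => ?_) (fun J hJ => ?_)
    (fun J hJ => Finset.sdiff_sdiff_eq_self (mem_powerset.mp (mem_filter.mp hJ).1))
    (fun J hJ => Finset.sdiff_sdiff_eq_self (mem_powerset.mp (mem_filter.mp hJ).1)) (fun J hJ => ?_)
  · simpa [hsum, Nat.sub_sub_self hj] using sdiff_mem_powerset_filter_sum_id hJ
  · simpa [hsum] using sdiff_mem_powerset_filter_sum_id hJ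
  · have hJ_sub := mem_powerset.mp (mem_filter.mp hJ).1
    have hcard : #(Icc 1 ℓ \ J) = ℓ - #J := by
      rw [card_sdiff_of_subset hJ_sub, Nat.card_Icc, Nat.add_sub_cancel]
    have ha : #J ≤ ℓ := by simpa using card_le_card hJ_sub
    rw [Finset.sdiff_sdiff_eq_self hJ_sub,
      prod_prod_swap_of_antisymm (fun k k' : ℕ => en τ η (k + k') / en τ η (k - k'))
        (fun k k' => en_add_div_en_sub_comm τ η k k'),
      hcard, ← mul_assoc, neg_one_pow_kappa_compl ha hN hj]

lemma sum_reflect_of_odd_of_symm (c : ℕ → ℂ) (f : ℂ → ℂ) (hf : ∀ x, f (-x) = -f x) {N : ℕ}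
    (hc : ∀ j ≤ N, c (N - j) = c j) (η ζ : ℂ) {K : ℂ} (hK : K ≠ 0) :
    ∑ j ∈ range (N + 1), (-1 : ℂ) ^ j * c j * f ((4 * (N : ℂ) * η - ζ) - 4 * (j : ℂ) * η)
        * K⁻¹ ^ (2 * (N - j))
      = -(-1) ^ N * K⁻¹ ^ (2 * N) *
        ∑ j ∈ range (N + 1), (-1 : ℂ) ^ j * c j * f (ζ - 4 * (j : ℂ) * η) * K ^ (2 * (N - j)) := by
  rw [← sum_range_reflect, mul_sum]
  refine sum_congr rfl fun j hj => ?_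
  obtain ⟨m, rfl⟩ := Nat.exists_eq_add_of_le (Nat.lt_succ_iff.mp (mem_range.mp hj))
  have hc' := hc j (Nat.le_add_right j m)
  simp only [Nat.add_sub_cancel, Nat.add_sub_cancel_left] at hc' ⊢
  rw [hc', show 4 * ((j + m : ℕ) : ℂ) * η - ζ - 4 * (m : ℂ) * η = -(ζ - 4 * (j : ℂ) * η) by
    push_cast; ring, hf]
  have hK' : K⁻¹ ^ (2 * (j + m)) * K ^ (2 * m) = K⁻¹ ^ (2 * j) := by
    rw [mul_add, pow_add, mul_assoc, ← mul_pow, inv_mul_cancel₀ hK, one_pow, mul_one]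
  have hs : (-1 : ℂ) ^ (j + m) * (-1) ^ j = (-1) ^ m := by
    rw [pow_add, mul_right_comm, ← pow_add, Even.neg_one_pow ⟨j, rfl⟩, one_mul]
  rw [← hK', ← hs]
  ring

theorem spectral_curve_hyperelliptic_involution_general
    (τ : ℂ) (ℓ : ℕ) (N : ℕ) (hN : N = ℓ*(ℓ+1)/2) (η : ℂ)
    (ζ K : ℂ) (hK : K ≠ 0)
    (hcurve : ∑ j ∈ Finset.range (N + 1),
        (-1 : ℂ)^j * Ccoef τ η ℓ j * theta1 τ (ζ - 4*(j : ℂ)*η) * K ^ (2*(N - j)) = 0) :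
    ∑ j ∈ Finset.range (N + 1),
        (-1 : ℂ)^j * Ccoef τ η ℓ j * theta1 τ ((4*(N : ℂ)*η - ζ) - 4*(j : ℂ)*η)
          * K⁻¹ ^ (2*(N - j)) = 0 := by
  rw [sum_reflect_of_odd_of_symm _ _ (theta1_neg τ) (fun j hj => Ccoef_reflect τ η hN hj) η ζ hK,
    hcurve, mul_zero]

/-- the spectral curve Γ_e is invariant under the hyperelliptic
involution (ζ, K) ↦ (4Nη − ζ, K⁻¹). -/
theorem spectral_curve_hyperelliptic_involution
    (τ : ℂ) (hτ : 0 < τ.im) (ℓ : ℕ) (hℓ : 0 < ℓ) (N : ℕ) (hN : N = ℓ*(ℓ+1)/2) (η : ℂ)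
    (hη : ∀ n : ℕ, 1 ≤ n → n ≤ 2*ℓ → theta1 τ (2*(n : ℂ)*η) ≠ 0)
    (ζ K : ℂ) (hK : K ≠ 0)
    (hcurve : ∑ j ∈ Finset.range (N + 1),
        (-1 : ℂ)^j * Ccoef τ η ℓ j * theta1 τ (ζ - 4*(j : ℂ)*η) * K ^ (2*(N - j)) = 0) :
    ∑ j ∈ Finset.range (N + 1),
        (-1 : ℂ)^j * Ccoef τ η ℓ j * theta1 τ ((4*(N : ℂ)*η - ζ) - 4*(j : ℂ)*η)
          * K⁻¹ ^ (2*(N - j)) = 0 :=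
  spectral_curve_hyperelliptic_involution_general τ ℓ N hN η ζ K hK hcurve
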